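/- arXiv:1405.3606 — 2 statements merged into one kernel-verified Lean document; each statement's English description precedes it below -/
import Mathlib

section
/- Let X and Y be chains with X bounded, let a ≤ b in X, and let F : X* → Y be a standard function. The following are equivalent: (i) F is preassociative and unarily quasi-range-idempotent, there exists a strictly increasing function f : [a,b] → Y with order-convex range such that F₁(x) = f(med(a, x, b)) for all x ∈ X, F₂(x, x) = F₁(x) for every x ∈ X, F₂ is nondecreasing in each argument, and the sets F₂(X, z) and F₂(z, X) are order-convex for every z ∈ X; (ii) F is preassociative and unarily quasi-range-idempotent, there exists a strictly increasing function f : [a,b] → Y with order-convex range such that F₁(x) = f(med(a, x, b)) for all x ∈ X, and for every n ≥ 2: Fₙ(n·x) = F₁(x) for every x ∈ X, Fₙ is nondecreasing in each argument, and the set Fₙ(y, X, z) is order-convex for every pair of tuples (y, z) with |y| + |z| = n − 1; (iii) there exist c, d ∈ [a,b] and a strictly increasing function f : [a,b] → Y with order-convex range such that Fₙ(x₁, …, xₙ) = f(med(a, (c ∧ x₁) ∨ med(⋀ᵢ xᵢ, c ∧ d, ⋁ᵢ xᵢ) ∨ (d ∧ xₙ), b)) for every n ≥ 1. In case (iii),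 f equals F₁ restricted to [a,b]. -/
/-! Variadic functions on tuples (modeled as lists). -/

variable {X Y Y' : Type*}

/-- A variadic function `F` is *standard* if `F x = F []` only for `x = []`. -/
def VStandard (F : List X → Y) : Prop := ∀ x : List X, F x = F [] → x = []

/-- An operation `F : X* → X ∪ {ε}` is *ε-standard* if it is standard and `F ε = ε`. -/
def VEpsStandard (F : List X → Option X) : Prop := VStandard F ∧ F [] = none

/-- `F` is *associative*: `F (x, y, z) = F (x, F y, z)`, where inserting the value `F y`
means inserting the one-element tuple if `F y ∈ X` and nothing if `F y = ε`. -/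
def VAssoc (F : List X → Option X) : Prop :=
  ∀ x y z : List X, F (x ++ y ++ z) = F (x ++ (F y).toList ++ z)

/-- `F` is *preassociative*: `F y = F y'` implies `F (x ++ y ++ z) = F (x ++ y' ++ z)`. -/
def VPreassoc (F : List X → Y) : Prop :=
  ∀ x y y' z : List X, F y = F y' → F (x ++ y ++ z) = F (x ++ y' ++ z)

/-- The range of the unary part `F₁` of `F`. -/
def VRanUnary (F : List X → Y) : Set Y := Set.range fun a : X => F [a]

/-- The range of `F^♭`, the restriction of `F` to nonempty tuples. -/
def VRanFlat (F : List X → Y) : Set Y := {y | ∃ x : List X, x ≠ [] ∧ F x = y}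

/-- `F` is *unarily quasi-range-idempotent*: `ran F₁ = ran F^♭`. -/
def VUnQRI (F : List X → Y) : Prop := VRanUnary F = VRanFlat F

/-- An operation `F` is *unarily range-idempotent*: `F (F x) = F x` for nonempty `x`,
with the convention for inserting values into tuples. -/
def VUnRI (F : List X → Option X) : Prop :=
  ∀ x : List X, x ≠ [] → F (F x).toList = F x

/-- `g` is a *quasi-inverse* of `f`. -/
def VQuasiInv (f : X → Y) (g : Y → X) : Prop :=
  (∀ y ∈ Set.range f, f (g y) = y) ∧ g '' Set.range f = Set.range g

/-- The set of elements of `X` attained by an operation `H` on nonempty tuples. -/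
def VRanFlatOp (H : List X → Option X) : Set X :=
  {a : X | ∃ x : List X, x ≠ [] ∧ H x = some a}

/-- An operation `F` is *range-idempotent* if `F (k·y) = y` for every `y ∈ ran F^♭ ∩ X`
and every `k ≥ 1`. -/
def VRangeIdem (F : List X → Option X) : Prop :=
  ∀ y : X, some y ∈ VRanFlat F → ∀ k : ℕ, 1 ≤ k → F (List.replicate k y) = some y

/-- The ternary median in a chain. -/
def med3 {Z : Type*} [LinearOrder Z] (x y z : Z) : Z :=
  min (min (max x y) (max y z)) (max z x)

section Lat
variable {Z : Type*} [LinearOrder Z]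

def vpPhi (c d p q : Z) : Z := max (max (min p q) (min c p)) (min d q)

def vpCl (a b t : Z) : Z := min (max a t) b

def vpP (c d x mn mx l : Z) : Z := max (max (max mn (min c x)) (min (min c d) mx)) (min d l)

theorem vpMed3 (a t b : Z) (hab : a ≤ b) : med3 a t b = vpCl a b t := by
  unfold med3 vpCl
  refine le_antisymm ?_ ?_ <;>
  · simp only [min_max_distrib_left, min_max_distrib_right, max_le_iff]
    simp [hab, min_le_iff, le_max_iff, le_min_iff, max_le_iff]

theorem vpPhi_assoc (c d p q r : Z) :
    vpPhi c d (vpPhi c d p q) r = vpPhi c d p (vpPhi c d q r) := by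
  unfold vpPhi
  refine le_antisymm ?_ ?_ <;>
  · simp only [min_max_distrib_left, min_max_distrib_right, max_le_iff]
    simp [min_le_iff, le_max_iff, le_min_iff, max_le_iff]

theorem vpPhi_self (c d s : Z) : vpPhi c d s s = s := by
  unfold vpPhi
  simp [min_le_iff, le_max_iff, le_min_iff, max_le_iff]

theorem vpPhi_mono (c d : Z) {p p' q q' : Z} (h1 : p ≤ p') (h2 : q ≤ q') :
    vpPhi c d p q ≤ vpPhi c d p' q' := by
  unfold vpPhi
  exact max_le_max (max_le_max (min_le_min h1 h2) (min_le_min le_rfl h1)) (min_le_min le_rfl h2)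

theorem vpPhi_clamp (a b c d s t : Z) (hac : a ≤ c) (hcb : c ≤ b) (had : a ≤ d) (hdb : d ≤ b) :
    vpPhi c d (vpCl a b s) (vpCl a b t) = vpCl a b (vpPhi c d s t) := by
  have hab : a ≤ b := hac.trans hcb
  unfold vpPhi vpCl
  refine le_antisymm ?_ ?_ <;>
  · simp only [min_max_distrib_left, min_max_distrib_right, max_le_iff]
    simp [*, min_le_iff, le_max_iff, le_min_iff, max_le_iff]

theorem vpStep (c d x mn mx l y : Z) (h1 : mn ≤ x) (h2 : l ≤ mx) :
    vpPhi c d (vpP c d x mn mx l) y = vpP c d x (min mn y) (max mx y) y := by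
  unfold vpPhi vpP
  refine le_antisymm ?_ ?_ <;>
  · simp only [min_max_distrib_left, min_max_distrib_right, max_le_iff]
    simp [*, min_le_iff, le_max_iff, le_min_iff, max_le_iff]

theorem vpP_diag (c d x : Z) : vpP c d x x x x = x := by
  unfold vpP
  simp [min_le_iff, le_max_iff, le_min_iff, max_le_iff]

theorem vpGraw (c d x mn mx l : Z) (h : mn ≤ mx) :
    max (max (min c x) (med3 mn (min c d) mx)) (min d l) = vpP c d x mn mx l := by
  unfold med3 vpP
  refine le_antisymm ?_ ?_ <;>
  · simp only [min_max_distrib_left, min_max_distrib_right, max_le_iff]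
    simp [*, min_le_iff, le_max_iff, le_min_iff, max_le_iff]

theorem vpPhi_fix1 (c d s w : Z) (h1 : min c s ≤ w) (h2 : w ≤ max s d) :
    vpPhi c d s w = w := by
  unfold vpPhi
  refine le_antisymm (max_le (max_le (min_le_right _ _) h1) (min_le_right _ _)) ?_
  rcases le_max_iff.mp h2 with h | h
  · exact le_max_of_le_left (le_max_of_le_left (le_min h le_rfl))
  · exact le_max_of_le_right (le_min h le_rfl)

theorem vpPhi_fix2 (c d u w : Z) (h1 : min d u ≤ w) (h2 : w ≤ max u c) :
    vpPhi c d w u = w := by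
  unfold vpPhi
  refine le_antisymm (max_le (max_le (min_le_left _ _) (min_le_right _ _)) h1) ?_
  rcases le_max_iff.mp h2 with h | h
  · exact le_max_of_le_left (le_max_of_le_left (le_min le_rfl h))
  · exact le_max_of_le_left (le_max_of_le_right (le_min h le_rfl))

theorem vpPhi_le_sup1 (c d s w : Z) : vpPhi c d s w ≤ max s d := by
  unfold vpPhi
  exact max_le (max_le (le_max_of_le_left (min_le_left _ _))
    (le_max_of_le_left (min_le_right _ _))) (le_max_of_le_right (min_le_left _ _))

theorem vpPhi_le_sup2 (c d u w : Z) : vpPhi c d w u ≤ max u c := by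
  unfold vpPhi
  exact max_le (max_le (le_max_of_le_left (min_le_right _ _))
    (le_max_of_le_right (min_le_left _ _))) (le_max_of_le_left (min_le_right _ _))

theorem vpPhi_ge_inf1 (c d s w : Z) : min c s ≤ vpPhi c d s w := by
  unfold vpPhi
  exact le_max_of_le_left (le_max_of_le_right le_rfl)

theorem vpPhi_ge_inf2 (c d u w : Z) : min d u ≤ vpPhi c d w u := by
  unfold vpPhi
  exact le_max_of_le_right le_rfl

/-- image of an interval under `vpPhi` in the first argument. -/
theorem vpPhi_img1 (c d u p q : Z) (hpq : p ≤ q) :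
    (fun r => vpPhi c d r u) '' Set.Icc p q = Set.Icc (vpPhi c d p u) (vpPhi c d q u) := by
  apply Set.Subset.antisymm
  · rintro _ ⟨r, ⟨h1, h2⟩, rfl⟩
    exact ⟨vpPhi_mono c d h1 le_rfl, vpPhi_mono c d h2 le_rfl⟩
  · rintro w ⟨h1, h2⟩
    have hfix : vpPhi c d w u = w :=
      vpPhi_fix2 c d u w ((vpPhi_ge_inf2 c d u p).trans h1) (h2.trans (vpPhi_le_sup2 c d u q))
    rcases le_total w p with h | h
    · exact ⟨p, ⟨le_rfl, hpq⟩, le_antisymm h1 (hfix.ge.trans (vpPhi_mono c d h le_rfl))⟩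
    rcases le_total q w with h' | h'
    · exact ⟨q, ⟨hpq, le_rfl⟩, le_antisymm ((vpPhi_mono c d h' le_rfl).trans hfix.le) h2⟩
    · exact ⟨w, ⟨h, h'⟩, hfix⟩

/-- image of an interval under `vpPhi` in the second argument. -/
theorem vpPhi_img2 (c d s p q : Z) (hpq : p ≤ q) :
    (fun t => vpPhi c d s t) '' Set.Icc p q = Set.Icc (vpPhi c d s p) (vpPhi c d s q) := by
  apply Set.Subset.antisymm
  · rintro _ ⟨r, ⟨h1, h2⟩, rfl⟩
    exact ⟨vpPhi_mono c d le_rfl h1, vpPhi_mono c d le_rfl h2⟩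
  · rintro w ⟨h1, h2⟩
    have hfix : vpPhi c d s w = w :=
      vpPhi_fix1 c d s w ((vpPhi_ge_inf1 c d s p).trans h1) (h2.trans (vpPhi_le_sup1 c d s q))
    rcases le_total w p with h | h
    · exact ⟨p, ⟨le_rfl, hpq⟩, le_antisymm h1 (hfix.ge.trans (vpPhi_mono c d le_rfl h))⟩
    rcases le_total q w with h' | h'
    · exact ⟨q, ⟨hpq, le_rfl⟩, le_antisymm ((vpPhi_mono c d le_rfl h').trans hfix.le) h2⟩
    · exact ⟨w, ⟨h, h'⟩, hfix⟩

theorem vpCl_mem (a b t : Z) (hab : a ≤ b) : vpCl a b t ∈ Set.Icc a b :=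
  ⟨le_min (le_max_left _ _) hab, min_le_right _ _⟩

theorem vpCl_of_mem {a b t : Z} (h : t ∈ Set.Icc a b) : vpCl a b t = t := by
  unfold vpCl; rw [max_eq_right h.1, min_eq_left h.2]

theorem vpCl_mono (a b : Z) : Monotone (vpCl a b) := fun s t h =>
  min_le_min (max_le_max le_rfl h) le_rfl

theorem vpCl_range (a b : Z) (hab : a ≤ b) : Set.range (vpCl a b) = Set.Icc a b := by
  apply Set.Subset.antisymm
  · rintro _ ⟨t, rfl⟩; exact vpCl_mem a b t hab
  · intro t ht; exact ⟨t, vpCl_of_mem ht⟩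

theorem vpPhi_mem {a b c d p q : Z} (hp : p ∈ Set.Icc a b) (hq : q ∈ Set.Icc a b) :
    vpPhi c d p q ∈ Set.Icc a b := by
  constructor
  · exact le_trans (le_min hp.1 hq.1) (le_max_of_le_left (le_max_of_le_left le_rfl))
  · exact max_le (max_le ((min_le_left _ _).trans hp.2) ((min_le_right _ _).trans hp.2))
      ((min_le_right _ _).trans hq.2)

end Lat


section Cases
variable {Z : Type*} [LinearOrder Z]

theorem vpPhi_case1 {c d p q : Z} (h1 : p ≤ q) (h2 : q ≤ d) : vpPhi c d p q = q := by
  unfold vpPhi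
  refine le_antisymm ?_ ?_ <;>
    simp [*, min_le_iff, le_max_iff, le_min_iff, max_le_iff]

theorem vpPhi_case2 {c d p q : Z} (h1 : p ≤ q) (h2 : d ≤ q) : vpPhi c d p q = max p d := by
  unfold vpPhi
  refine le_antisymm ?_ ?_ <;>
  · simp only [min_max_distrib_left, min_max_distrib_right, max_le_iff]
    simp [*, min_le_iff, le_max_iff, le_min_iff, max_le_iff]

theorem vpPhi_case3 {c d p q : Z} (h1 : q ≤ p) (h2 : p ≤ c) : vpPhi c d p q = p := by
  unfold vpPhi
  refine le_antisymm ?_ ?_ <;>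
    simp [*, min_le_iff, le_max_iff, le_min_iff, max_le_iff]

theorem vpPhi_case4 {c d p q : Z} (h1 : q ≤ p) (h2 : c ≤ p) : vpPhi c d p q = max q c := by
  unfold vpPhi
  refine le_antisymm ?_ ?_ <;>
  · simp only [min_max_distrib_left, min_max_distrib_right, max_le_iff]
    simp [*, min_le_iff, le_max_iff, le_min_iff, max_le_iff]

end Cases

section Fold
variable {Z : Type*} [LinearOrder Z]

/-- the clamped fold step. -/
def vpSF (a b c d : Z) (s y : Z) : Z := vpPhi c d s (vpCl a b y)

/-- the clamped fold: value of the n-ary quasi-median on `x :: xs`. -/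
def vpK (a b c d : Z) (x : Z) (xs : List Z) : Z := xs.foldl (vpSF a b c d) (vpCl a b x)

variable (a b c d : Z)

theorem vpFoldl_mem (hab : a ≤ b) (z : List Z) : ∀ s ∈ Set.Icc a b,
    z.foldl (vpSF a b c d) s ∈ Set.Icc a b := by
  induction z with
  | nil => exact fun s hs => hs
  | cons y z ih =>
    intro s hs
    exact ih _ (vpPhi_mem hs (vpCl_mem a b y hab))

theorem vpK_mem (hab : a ≤ b) (x : Z) (xs : List Z) : vpK a b c d x xs ∈ Set.Icc a b :=
  vpFoldl_mem a b c d hab xs _ (vpCl_mem a b x hab)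

theorem vpK_snoc (x y : Z) (xs : List Z) :
    vpK a b c d x (xs ++ [y]) = vpPhi c d (vpK a b c d x xs) (vpCl a b y) := by
  simp [vpK, List.foldl_append, vpSF]

theorem vpFoldr_min_le (x : Z) (xs : List Z) : xs.foldr min x ≤ x := by
  induction xs with
  | nil => exact le_rfl
  | cons y ys ih => exact (min_le_right _ _).trans ih

theorem vpLe_foldr_max (x : Z) (xs : List Z) : x ≤ xs.foldr max x := by
  induction xs with
  | nil => exact le_rfl
  | cons y ys ih => exact ih.trans (le_max_right _ _)

theorem vpFoldr_min_le_mem (x : Z) (xs : List Z) : ∀ t ∈ xs, xs.foldr min x ≤ t := by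
  induction xs with
  | nil => intro t ht; cases ht
  | cons y ys ih =>
    intro t ht
    rcases List.mem_cons.mp ht with rfl | ht
    · exact min_le_left _ _
    · exact (min_le_right _ _).trans (ih t ht)

theorem vpMem_le_foldr_max (x : Z) (xs : List Z) : ∀ t ∈ xs, t ≤ xs.foldr max x := by
  induction xs with
  | nil => intro t ht; cases ht
  | cons y ys ih =>
    intro t ht
    rcases List.mem_cons.mp ht with rfl | ht
    · exact le_max_left _ _
    · exact (ih t ht).trans (le_max_right _ _)

theorem vpFoldr_min_snoc (x y : Z) (xs : List Z) :
    (xs ++ [y]).foldr min x = min (xs.foldr min x) y := by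
  have aux : ∀ (w : Z) (l : List Z), l.foldr min (min y w) = min (l.foldr min w) y := by
    intro w l
    induction l with
    | nil => exact min_comm y w
    | cons z zs ih => simp [List.foldr_cons, ih, min_assoc]
  simpa [List.foldr_append] using aux x xs

theorem vpFoldr_max_snoc (x y : Z) (xs : List Z) :
    (xs ++ [y]).foldr max x = max (xs.foldr max x) y := by
  have aux : ∀ (w : Z) (l : List Z), l.foldr max (max y w) = max (l.foldr max w) y := by
    intro w l
    induction l with
    | nil => exact max_comm y w
    | cons z zs ih => simp [List.foldr_cons, ih, max_assoc]
  simpa [List.foldr_append] using aux x xs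

theorem vpGetLast_mem_bounds (x : Z) (xs : List Z) :
    xs.foldr min x ≤ (x :: xs).getLast (List.cons_ne_nil x xs) ∧
    (x :: xs).getLast (List.cons_ne_nil x xs) ≤ xs.foldr max x := by
  have hmem := List.getLast_mem (List.cons_ne_nil x xs)
  rcases List.mem_cons.mp hmem with h | h
  · rw [h]; exact ⟨vpFoldr_min_le x xs, vpLe_foldr_max x xs⟩
  · exact ⟨vpFoldr_min_le_mem x xs _ h, vpMem_le_foldr_max x xs _ h⟩

theorem vpK_eq_P (hac : a ≤ c) (hcb : c ≤ b) (had : a ≤ d) (hdb : d ≤ b) (x : Z) (xs : List Z) :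
    vpK a b c d x xs =
      vpCl a b (vpP c d x (xs.foldr min x) (xs.foldr max x)
        ((x :: xs).getLast (List.cons_ne_nil x xs))) := by
  induction xs using List.reverseRecOn with
  | nil => simp [vpK, vpP_diag]
  | append_singleton xs y ih =>
    rw [vpK_snoc, ih, vpPhi_clamp a b c d _ _ hac hcb had hdb,
      vpStep c d x _ _ _ y (vpFoldr_min_le x xs) (vpGetLast_mem_bounds x xs).2,
      vpFoldr_min_snoc, vpFoldr_max_snoc]
    have hgl : (x :: (xs ++ [y])).getLast (List.cons_ne_nil _ _) = y := by simp
    rw [hgl]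

theorem vpBlock (x : Z) (xs : List Z) : ∀ s : Z,
    (x :: xs).foldl (vpSF a b c d) s = vpPhi c d s (vpK a b c d x xs) := by
  induction xs using List.reverseRecOn with
  | nil => intro s; rfl
  | append_singleton xs y ih =>
    intro s
    rw [show x :: (xs ++ [y]) = (x :: xs) ++ [y] by simp, List.foldl_append, ih s]
    simp only [List.foldl_cons, List.foldl_nil, vpSF]
    rw [vpPhi_assoc, ← vpK_snoc]

theorem vpFoldl_mono (z : List Z) : ∀ {s s' : Z}, s ≤ s' →
    z.foldl (vpSF a b c d) s ≤ z.foldl (vpSF a b c d) s' := by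
  induction z with
  | nil => exact fun h => h
  | cons y z ih => exact fun h => ih (vpPhi_mono c d h le_rfl)

theorem vpFoldl_img (z : List Z) : ∀ p q : Z, p ≤ q →
    (fun r => z.foldl (vpSF a b c d) r) '' Set.Icc p q =
      Set.Icc (z.foldl (vpSF a b c d) p) (z.foldl (vpSF a b c d) q) := by
  induction z with
  | nil => intro p q hpq; simp
  | cons y z ih =>
    intro p q hpq
    have hcomp : (fun r => (y :: z).foldl (vpSF a b c d) r) =
        (fun r => z.foldl (vpSF a b c d) r) ∘ (fun r => vpPhi c d r (vpCl a b y)) := rfl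
    rw [hcomp, Set.image_comp, vpPhi_img1 c d (vpCl a b y) p q hpq,
      ih _ _ (vpPhi_mono c d hpq le_rfl)]
    rfl

theorem vpK_replicate (x : Z) : ∀ k : ℕ, vpK a b c d x (List.replicate k x) = vpCl a b x := by
  intro k
  induction k with
  | zero => rfl
  | succ k ih => rw [List.replicate_succ', vpK_snoc, ih, vpPhi_self]

end Fold


section Plumb
variable {Z W : Type*} [LinearOrder Z] [LinearOrder W]

theorem vpMonoOn {f : Z → W} {s : Set Z} (hf : StrictMonoOn f s) : MonotoneOn f s := by
  intro x hx y hy hxy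
  rcases eq_or_lt_of_le hxy with rfl | h
  · exact le_rfl
  · exact (hf hx hy h).le

theorem vpImgConv {f : Z → W} {a b p q : Z}
    (hf : StrictMonoOn f (Set.Icc a b)) (hcv : (f '' Set.Icc a b).OrdConnected)
    (hp : p ∈ Set.Icc a b) (hq : q ∈ Set.Icc a b) : (f '' Set.Icc p q).OrdConnected := by
  have hsub : Set.Icc p q ⊆ Set.Icc a b := fun r hr => ⟨hp.1.trans hr.1, hr.2.trans hq.2⟩
  refine ⟨?_⟩
  rintro u ⟨s, hs, rfl⟩ v ⟨t, ht, rfl⟩ w hw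
  obtain ⟨r, hr, rfl⟩ := hcv.out ⟨s, hsub hs, rfl⟩ ⟨t, hsub ht, rfl⟩ hw
  refine ⟨r, ⟨hs.1.trans ((hf.le_iff_le (hsub hs) hr).mp hw.1),
    ((hf.le_iff_le hr (hsub ht)).mp hw.2).trans ht.2⟩, rfl⟩

theorem vpMonoImg {g : Z → W} {S : Set Z} (hg : Monotone g)
    (hrg : (Set.range g).OrdConnected) (hS : S.OrdConnected) : (g '' S).OrdConnected := by
  refine ⟨?_⟩
  rintro u ⟨s, hs, rfl⟩ v ⟨t, ht, rfl⟩ w hw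
  obtain ⟨r, rfl⟩ := hrg.out (Set.mem_range_self s) (Set.mem_range_self t) hw
  rcases le_total s t with hst | hst
  · rcases le_total r s with hrs | hrs
    · exact ⟨s, hs, le_antisymm hw.1 (hg hrs)⟩
    · rcases le_total t r with htr | htr
      · exact ⟨t, ht, le_antisymm (hg htr) hw.2⟩
      · exact ⟨r, hS.out hs ht ⟨hrs, htr⟩, rfl⟩
  · exact ⟨s, hs, le_antisymm hw.1 (hw.2.trans (hg hst))⟩
end Plumb


section FSide
variable {X Y : Type*} [LinearOrder X] [LinearOrder Y] {F : List X → Y} {f : X → Y} {a b : X}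

theorem vpF1clamp (hab : a ≤ b) (hF1 : ∀ x, F [x] = f (med3 a x b)) :
    ∀ x, F [x] = f (vpCl a b x) := fun x => by rw [hF1 x, vpMed3 a x b hab]

theorem vpRepExists (hab : a ≤ b) (hU : VUnQRI F) (hF1 : ∀ x, F [x] = f (vpCl a b x)) :
    ∀ l : List X, ∃ u, l ≠ [] → u ∈ Set.Icc a b ∧ F l = F [u] := by
  intro l
  by_cases hl : l = []
  · exact ⟨a, fun h => absurd hl h⟩
  · have hmem : F l ∈ VRanFlat F := ⟨l, hl, rfl⟩
    rw [← hU] at hmem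
    obtain ⟨t, ht⟩ := hmem
    refine ⟨vpCl a b t, fun _ => ⟨vpCl_mem a b t hab, ?_⟩⟩
    have ht' : F [t] = F l := ht
    rw [← ht', hF1 t, hF1 (vpCl a b t), vpCl_of_mem (vpCl_mem a b t hab)]

theorem vpRangeFold (a b c d : X) {g : X → X} {p q : X}
    (gr : Set.range g = Set.Icc p q) (z : List X) (f : X → Y) :
    (Set.range fun t => f (z.foldl (vpSF a b c d) (g t))) =
      f '' ((fun r => z.foldl (vpSF a b c d) r) '' Set.Icc p q) := by
  have h1 : (fun t => f (z.foldl (vpSF a b c d) (g t))) =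
      f ∘ (fun r => z.foldl (vpSF a b c d) r) ∘ g := rfl
  rw [h1, Set.range_comp, Set.range_comp, gr]

theorem vpRange2 (a b c d s : X) (hab : a ≤ b) :
    Set.range (fun t => vpPhi c d s (vpCl a b t)) =
      Set.Icc (vpPhi c d s a) (vpPhi c d s b) := by
  have h1 : (fun t => vpPhi c d s (vpCl a b t)) = (fun t => vpPhi c d s t) ∘ vpCl a b := rfl
  rw [h1, Set.range_comp, vpCl_range a b hab, vpPhi_img2 c d s a b hab]

end FSide

theorem stmt18 {X Y : Type*} [LinearOrder X] [BoundedOrder X] [LinearOrder Y]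
    (a b : X) (hab : a ≤ b) (F : List X → Y) (hSt : VStandard F) :
    -- (i) ↔ (ii)
    (((VPreassoc F ∧ VUnQRI F ∧
        (∃ f : X → Y, StrictMonoOn f (Set.Icc a b) ∧
          (f '' Set.Icc a b).OrdConnected ∧
          ∀ x : X, F [x] = f (med3 a x b)) ∧
        (∀ x : X, F [x, x] = F [x]) ∧
        (∀ z : X, Monotone fun x : X => F [x, z]) ∧
        (∀ z : X, Monotone fun y : X => F [z, y]) ∧
        (∀ z : X, (Set.range fun x : X => F [x, z]).OrdConnected) ∧
        (∀ z : X, (Set.range fun y : X => F [z, y]).OrdConnected))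
      ↔
      (VPreassoc F ∧ VUnQRI F ∧
        (∃ f : X → Y, StrictMonoOn f (Set.Icc a b) ∧
          (f '' Set.Icc a b).OrdConnected ∧
          ∀ x : X, F [x] = f (med3 a x b)) ∧
        (∀ n : ℕ, 2 ≤ n → ∀ x : X, F (List.replicate n x) = F [x]) ∧
        (∀ y z : List X, 1 ≤ y.length + z.length →
          (Monotone fun t : X => F (y ++ t :: z)) ∧
          (Set.range fun t : X => F (y ++ t :: z)).OrdConnected))))
    ∧
    -- (ii) ↔ (iii)
    (((VPreassoc F ∧ VUnQRI F ∧
        (∃ f : X → Y, StrictMonoOn f (Set.Icc a b) ∧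
          (f '' Set.Icc a b).OrdConnected ∧
          ∀ x : X, F [x] = f (med3 a x b)) ∧
        (∀ n : ℕ, 2 ≤ n → ∀ x : X, F (List.replicate n x) = F [x]) ∧
        (∀ y z : List X, 1 ≤ y.length + z.length →
          (Monotone fun t : X => F (y ++ t :: z)) ∧
          (Set.range fun t : X => F (y ++ t :: z)).OrdConnected))
      ↔
      (∃ c ∈ Set.Icc a b, ∃ d ∈ Set.Icc a b, ∃ f : X → Y,
        StrictMonoOn f (Set.Icc a b) ∧ (f '' Set.Icc a b).OrdConnected ∧
        ∀ (x : X) (xs : List X),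
          F (x :: xs) = f (med3 a
            (max (max (min c x)
              (med3 (xs.foldr min x) (min c d) (xs.foldr max x)))
              (min d ((x :: xs).getLast (List.cons_ne_nil x xs)))) b))))
    ∧
    -- in case (iii), f equals F₁ restricted to [a,b]
    (∀ c ∈ Set.Icc a b, ∀ d ∈ Set.Icc a b, ∀ f : X → Y,
      StrictMonoOn f (Set.Icc a b) → (f '' Set.Icc a b).OrdConnected →
      (∀ (x : X) (xs : List X),
        F (x :: xs) = f (med3 a
          (max (max (min c x)
            (med3 (xs.foldr min x) (min c d) (xs.foldr max x)))
            (min d ((x :: xs).getLast (List.cons_ne_nil x xs)))) b)) →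
      ∀ t ∈ Set.Icc a b, f t = F [t]) := by
  refine ⟨⟨?_, ?_⟩, ⟨?_, ?_⟩, ?_⟩
  · -- (i) → (ii)
    rintro ⟨hP, hU, ⟨f, hf, hcv, hF1m⟩, hId, hM1, hM2, hC1, hC2⟩
    have hF1 : ∀ x, F [x] = f (vpCl a b x) := vpF1clamp hab hF1m
    choose h hh using vpRepExists hab hU hF1
    have hin : ∀ l : List X, l ≠ [] → h l ∈ Set.Icc a b := fun l hl => (hh l hl).1
    have hFh : ∀ l : List X, l ≠ [] → F l = F [h l] := fun l hl => (hh l hl).2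
    have finj : ∀ {u v : X}, u ∈ Set.Icc a b → v ∈ Set.Icc a b → f u = f v → u = v :=
      fun hu hv h' => hf.injOn hu hv h'
    have hfm : MonotoneOn f (Set.Icc a b) := vpMonoOn hf
    have hnn : ∀ p q : X, ([p, q] : List X) ≠ [] := fun p q => by simp
    have key2 : ∀ p q : X, F [p, q] = f (h [p, q]) := fun p q => by
      rw [hFh [p, q] (hnn p q), hF1, vpCl_of_mem (hin [p, q] (hnn p q))]
    have hRep : ∀ n, 2 ≤ n → ∀ x : X, F (List.replicate n x) = F [x] := by
      intro n hn x
      induction n, hn using Nat.le_induction with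
      | base => exact hId x
      | succ n hn ih =>
        have h2 := hP [x] (List.replicate n x) [x] [] ih
        calc F (List.replicate (n + 1) x) = F ([x] ++ List.replicate n x ++ []) := by
              simp [List.replicate_succ]
          _ = F ([x] ++ [x] ++ []) := h2
          _ = F [x] := hId x
    have mono2' : ∀ u : X, ∀ {t t' : X}, t ≤ t' → h [u, t] ≤ h [u, t'] := by
      intro u t t' htt'
      refine (hf.le_iff_le (hin _ (hnn _ _)) (hin _ (hnn _ _))).mp ?_
      rw [← key2, ← key2]
      exact hM2 u htt'
    have Sconv : ∀ u : X, ∀ {w t1 t2 : X}, h [u, t1] ≤ w → w ≤ h [u, t2] →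
        w ∈ Set.Icc a b → ∃ t, h [u, t] = w := by
      intro u w t1 t2 hw1 hw2 hwI
      have hfw : f w ∈ Set.Icc (F [u, t1]) (F [u, t2]) := by
        rw [key2, key2]
        exact ⟨hfm (hin _ (hnn _ _)) hwI hw1, hfm hwI (hin _ (hnn _ _)) hw2⟩
      obtain ⟨t, ht⟩ := (hC2 u).out ⟨t1, rfl⟩ ⟨t2, rfl⟩ hfw
      exact ⟨t, finj (hin _ (hnn _ _)) hwI (by rw [← key2]; exact ht)⟩
    refine ⟨hP, hU, ⟨f, hf, hcv, hF1m⟩, hRep, ?_⟩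
    intro ys zs hlen
    rcases ys with _ | ⟨y0, ys'⟩
    · rcases zs with _ | ⟨z0, zs'⟩
      · simp at hlen
      · have hznn : (z0 :: zs') ≠ [] := by simp
        have hfun : (fun t : X => F ([] ++ t :: z0 :: zs')) =
            fun t : X => F [t, h (z0 :: zs')] := by
          funext t
          simpa using hP [t] (z0 :: zs') [h (z0 :: zs')] [] (hFh _ hznn)
        rw [hfun]
        exact ⟨hM1 _, hC1 _⟩
    · rcases zs with _ | ⟨z0, zs'⟩
      · have hynn : (y0 :: ys') ≠ [] := by simp
        have hfun : (fun t : X => F ((y0 :: ys') ++ t :: [])) =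
            fun t : X => F [h (y0 :: ys'), t] := by
          funext t
          simpa using hP [] (y0 :: ys') [h (y0 :: ys')] [t] (hFh _ hynn)
        rw [hfun]
        exact ⟨hM2 _, hC2 _⟩
      · have hynn : (y0 :: ys') ≠ [] := by simp
        have hznn : (z0 :: zs') ≠ [] := by simp
        have hfun : (fun t : X => F ((y0 :: ys') ++ t :: z0 :: zs')) =
            (fun s : X => F [s, h (z0 :: zs')]) ∘ (fun t : X => h [h (y0 :: ys'), t]) := by
          funext t
          have e1 : F ((y0 :: ys') ++ t :: z0 :: zs') = F (h (y0 :: ys') :: t :: z0 :: zs') := by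
            simpa using hP [] (y0 :: ys') [h (y0 :: ys')] (t :: z0 :: zs') (hFh _ hynn)
          have e2 : F (h (y0 :: ys') :: t :: z0 :: zs') =
              F (h [h (y0 :: ys'), t] :: z0 :: zs') := by
            simpa using hP [] [h (y0 :: ys'), t] [h [h (y0 :: ys'), t]] (z0 :: zs')
              (hFh _ (hnn _ _))
          have e3 : F (h [h (y0 :: ys'), t] :: z0 :: zs') =
              F [h [h (y0 :: ys'), t], h (z0 :: zs')] := by
            simpa using hP [h [h (y0 :: ys'), t]] (z0 :: zs') [h (z0 :: zs')] [] (hFh _ hznn)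
          rw [e1, e2, e3]
          rfl
        constructor
        · rw [hfun]
          exact fun t t' htt' => hM1 (h (z0 :: zs')) (mono2' (h (y0 :: ys')) htt')
        · rw [hfun, Set.range_comp]
          refine vpMonoImg (hM1 (h (z0 :: zs'))) (hC1 (h (z0 :: zs'))) ?_
          refine ⟨?_⟩
          rintro α ⟨t1, rfl⟩ β ⟨t2, rfl⟩ w hw
          have hwI : w ∈ Set.Icc a b :=
            ⟨(hin _ (hnn _ _)).1.trans hw.1, hw.2.trans (hin _ (hnn _ _)).2⟩
          exact Sconv (h (y0 :: ys')) hw.1 hw.2 hwI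
  · -- (ii) → (i)
    rintro ⟨hP, hU, hfex, hRep, hMC⟩
    refine ⟨hP, hU, hfex, ?_, ?_, ?_, ?_, ?_⟩
    · intro x
      exact hRep 2 le_rfl x
    · intro z
      exact (hMC [] [z] (by simp)).1
    · intro z
      exact (hMC [z] [] (by simp)).1
    · intro z
      exact (hMC [] [z] (by simp)).2
    · intro z
      exact (hMC [z] [] (by simp)).2
  · -- (ii) → (iii)
    rintro ⟨hP, hU, ⟨f, hf, hcv, hF1m⟩, hRep, hMC⟩
    have hF1 : ∀ x, F [x] = f (vpCl a b x) := vpF1clamp hab hF1m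
    choose h hh using vpRepExists hab hU hF1
    have hin : ∀ l : List X, l ≠ [] → h l ∈ Set.Icc a b := fun l hl => (hh l hl).1
    have hFh : ∀ l : List X, l ≠ [] → F l = F [h l] := fun l hl => (hh l hl).2
    have finj : ∀ {u v : X}, u ∈ Set.Icc a b → v ∈ Set.Icc a b → f u = f v → u = v :=
      fun hu hv h' => hf.injOn hu hv h'
    have hfm : MonotoneOn f (Set.Icc a b) := vpMonoOn hf
    have hnn : ∀ p q : X, ([p, q] : List X) ≠ [] := fun p q => by simp
    have key2 : ∀ p q : X, F [p, q] = f (h [p, q]) := fun p q => by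
      rw [hFh [p, q] (hnn p q), hF1, vpCl_of_mem (hin [p, q] (hnn p q))]
    have assoc : ∀ p q r : X, h [h [p, q], r] = h [p, h [q, r]] := by
      intro p q r
      refine finj (hin _ (hnn _ _)) (hin _ (hnn _ _)) ?_
      rw [← key2, ← key2]
      have e1 : F [p, q, r] = F [h [p, q], r] := by
        simpa using hP [] [p, q] [h [p, q]] [r] (hFh [p, q] (hnn p q))
      have e2 : F [p, q, r] = F [p, h [q, r]] := by
        simpa using hP [p] [q, r] [h [q, r]] [] (hFh [q, r] (hnn q r))
      rw [← e1, e2]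
    have hIa : a ∈ Set.Icc a b := ⟨le_rfl, hab⟩
    have hIb : b ∈ Set.Icc a b := ⟨hab, le_rfl⟩
    have idem : ∀ p : X, p ∈ Set.Icc a b → h [p, p] = p := by
      intro p hp
      refine finj (hin _ (hnn _ _)) hp ?_
      rw [← key2]
      have h2 : F [p, p] = F [p] := hRep 2 le_rfl p
      rw [h2, hF1, vpCl_of_mem hp]
    have mono1 : ∀ q : X, ∀ {p p' : X}, p ≤ p' → h [p, q] ≤ h [p', q] := by
      intro q p p' hpp'
      refine (hf.le_iff_le (hin _ (hnn _ _)) (hin _ (hnn _ _))).mp ?_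
      rw [← key2, ← key2]
      exact (hMC [] [q] (by simp)).1 hpp'
    have mono2 : ∀ p : X, ∀ {q q' : X}, q ≤ q' → h [p, q] ≤ h [p, q'] := by
      intro p q q' hqq'
      refine (hf.le_iff_le (hin _ (hnn _ _)) (hin _ (hnn _ _))).mp ?_
      rw [← key2, ← key2]
      exact (hMC [p] [] (by simp)).1 hqq'
    have reach1 : ∀ v t1 t2 w : X, h [t1, v] ≤ w → w ≤ h [t2, v] → w ∈ Set.Icc a b →
        ∃ t, h [t, v] = w := by
      intro v t1 t2 w hw1 hw2 hwI
      have hfw : f w ∈ Set.Icc (F [t1, v]) (F [t2, v]) := by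
        rw [key2, key2]
        exact ⟨hfm (hin _ (hnn _ _)) hwI hw1, hfm hwI (hin _ (hnn _ _)) hw2⟩
      obtain ⟨t, ht⟩ := ((hMC [] [v] (by simp)).2).out ⟨t1, rfl⟩ ⟨t2, rfl⟩ hfw
      exact ⟨t, finj (hin _ (hnn _ _)) hwI (by rw [← key2]; exact ht)⟩
    have reach2 : ∀ u t1 t2 w : X, h [u, t1] ≤ w → w ≤ h [u, t2] → w ∈ Set.Icc a b →
        ∃ t, h [u, t] = w := by
      intro u t1 t2 w hw1 hw2 hwI
      have hfw : f w ∈ Set.Icc (F [u, t1]) (F [u, t2]) := by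
        rw [key2, key2]
        exact ⟨hfm (hin _ (hnn _ _)) hwI hw1, hfm hwI (hin _ (hnn _ _)) hw2⟩
      obtain ⟨t, ht⟩ := ((hMC [u] [] (by simp)).2).out ⟨t1, rfl⟩ ⟨t2, rfl⟩ hfw
      exact ⟨t, finj (hin _ (hnn _ _)) hwI (by rw [← key2]; exact ht)⟩
    obtain ⟨c, hcdef⟩ : ∃ c : X, c = h [b, a] := ⟨_, rfl⟩
    obtain ⟨d, hddef⟩ : ∃ d : X, d = h [a, b] := ⟨_, rfl⟩
    have hcI : c ∈ Set.Icc a b := by rw [hcdef]; exact hin _ (hnn _ _)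
    have hdI : d ∈ Set.Icc a b := by rw [hddef]; exact hin _ (hnn _ _)
    have hca : h [c, a] = c := by rw [hcdef, assoc b a a, idem a hIa]
    have had : h [a, d] = d := by rw [hddef, ← assoc a a b, idem a hIa]
    have hdb2 : h [d, b] = d := by rw [hddef, assoc a b b, idem b hIb]
    have hbc : h [b, c] = c := by rw [hcdef, ← assoc b b a, idem b hIb]
    have E1 : ∀ x : X, x ∈ Set.Icc a b → h [x, a] = min c x := by
      intro x hx
      rcases le_total x c with hxc | hcx
      · rw [min_eq_right hxc]
        obtain ⟨t, ht⟩ := reach1 a a c x (by rw [idem a hIa]; exact hx.1)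
          (by rw [hca]; exact hxc) hx
        rw [← ht, assoc t a a, idem a hIa]
      · rw [min_eq_left hcx]
        refine le_antisymm ?_ ?_
        · rw [hcdef]; exact mono1 a hx.2
        · rw [← hca]; exact mono1 a hcx
    have E2 : ∀ y : X, y ∈ Set.Icc a b → h [a, y] = min d y := by
      intro y hy
      rcases le_total y d with hyd | hdy
      · rw [min_eq_right hyd]
        obtain ⟨t, ht⟩ := reach2 a a d y (by rw [idem a hIa]; exact hy.1)
          (by rw [had]; exact hyd) hy
        rw [← ht, ← assoc a a t, idem a hIa]
      · rw [min_eq_left hdy]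
        refine le_antisymm ?_ ?_
        · rw [hddef]; exact mono2 a hy.2
        · rw [← had]; exact mono2 a hdy
    have E3 : ∀ x : X, x ∈ Set.Icc a b → h [x, b] = max d x := by
      intro x hx
      rcases le_total d x with hdx | hxd
      · rw [max_eq_right hdx]
        obtain ⟨t, ht⟩ := reach1 b d b x (by rw [hdb2]; exact hdx)
          (by rw [idem b hIb]; exact hx.2) hx
        rw [← ht, assoc t b b, idem b hIb]
      · rw [max_eq_left hxd]
        refine le_antisymm ?_ ?_
        · rw [← hdb2]; exact mono1 b hxd
        · rw [hddef]; exact mono1 b hx.1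
    have E4 : ∀ y : X, y ∈ Set.Icc a b → h [b, y] = max c y := by
      intro y hy
      rcases le_total c y with hcy | hyc
      · rw [max_eq_right hcy]
        obtain ⟨t, ht⟩ := reach2 b c b y (by rw [hbc]; exact hcy)
          (by rw [idem b hIb]; exact hy.2) hy
        rw [← ht, ← assoc b b t, idem b hIb]
      · rw [max_eq_left hyc]
        refine le_antisymm ?_ ?_
        · rw [← hbc]; exact mono2 b hyc
        · rw [hcdef]; exact mono2 b hy.1
    have classify : ∀ p q : X, p ∈ Set.Icc a b → q ∈ Set.Icc a b →
        h [p, q] = vpPhi c d p q := by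
      intro p q hp hq
      rcases le_total p q with hpq | hqp
      · rcases le_total q d with hqd | hdq
        · rw [vpPhi_case1 hpq hqd]
          refine le_antisymm ?_ ?_
          · calc h [p, q] ≤ h [q, q] := mono1 q hpq
              _ = q := idem q hq
          · calc q = min d q := (min_eq_right hqd).symm
              _ = h [a, q] := (E2 q hq).symm
              _ ≤ h [p, q] := mono1 q hp.1
        · rw [vpPhi_case2 hpq hdq]
          refine le_antisymm ?_ ?_
          · calc h [p, q] ≤ h [p, b] := mono2 p hq.2
              _ = max d p := E3 p hp
              _ = max p d := max_comm _ _
          · refine max_le ?_ ?_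
            · calc p = h [p, p] := (idem p hp).symm
                _ ≤ h [p, q] := mono2 p hpq
            · calc d = min d q := (min_eq_left hdq).symm
                _ = h [a, q] := (E2 q hq).symm
                _ ≤ h [p, q] := mono1 q hp.1
      · rcases le_total p c with hpc | hcp
        · rw [vpPhi_case3 hqp hpc]
          refine le_antisymm ?_ ?_
          · calc h [p, q] ≤ h [p, p] := mono2 p hqp
              _ = p := idem p hp
          · calc p = min c p := (min_eq_right hpc).symm
              _ = h [p, a] := (E1 p hp).symm
              _ ≤ h [p, q] := mono2 p hq.1
        · rw [vpPhi_case4 hqp hcp]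
          refine le_antisymm ?_ ?_
          · calc h [p, q] ≤ h [b, q] := mono1 q hp.2
              _ = max c q := E4 q hq
              _ = max q c := max_comm _ _
          · refine max_le ?_ ?_
            · calc q = h [q, q] := (idem q hq).symm
                _ ≤ h [p, q] := mono1 q hqp
            · calc c = min c p := (min_eq_left hcp).symm
                _ = h [p, a] := (E1 p hp).symm
                _ ≤ h [p, q] := mono2 p hq.1
    have hKform : ∀ (x : X) (xs : List X), F (x :: xs) = f (vpK a b c d x xs) := by
      intro x xs
      induction xs using List.reverseRecOn with
      | nil => exact hF1 x
      | append_singleton xs y ih =>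
        have hKmem := vpK_mem a b c d hab x xs
        have hxs : F (x :: xs) = F [vpK a b c d x xs] := by
          rw [ih, hF1, vpCl_of_mem hKmem]
        have e1 : F (x :: (xs ++ [y])) = F [vpK a b c d x xs, y] := by
          simpa using hP [] (x :: xs) [vpK a b c d x xs] [y] hxs
        have e2' : F [y] = F [vpCl a b y] := by
          rw [hF1 y, hF1 (vpCl a b y), vpCl_of_mem (vpCl_mem a b y hab)]
        have e2 : h [vpK a b c d x xs, y] = h [vpK a b c d x xs, vpCl a b y] := by
          refine finj (hin _ (hnn _ _)) (hin _ (hnn _ _)) ?_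
          rw [← key2, ← key2]
          simpa using hP [vpK a b c d x xs] [y] [vpCl a b y] [] e2'
        rw [e1, key2, e2, classify _ _ hKmem (vpCl_mem a b y hab), vpK_snoc]
    refine ⟨c, hcI, d, hdI, f, hf, hcv, fun x xs => ?_⟩
    rw [hKform x xs, vpMed3 _ _ _ hab,
      vpGraw c d x _ _ _ ((vpFoldr_min_le x xs).trans (vpLe_foldr_max x xs)),
      ← vpK_eq_P a b c d hcI.1 hcI.2 hdI.1 hdI.2 x xs]
  · -- (iii) → (ii)
    rintro ⟨c, hcI, d, hdI, f, hf, hcv, hform⟩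
    have hbound : ∀ (x : X) (xs : List X), xs.foldr min x ≤ xs.foldr max x :=
      fun x xs => (vpFoldr_min_le x xs).trans (vpLe_foldr_max x xs)
    have hKform : ∀ (x : X) (xs : List X), F (x :: xs) = f (vpK a b c d x xs) := by
      intro x xs
      rw [hform x xs, vpMed3 _ _ _ hab, vpGraw c d x _ _ _ (hbound x xs),
        ← vpK_eq_P a b c d hcI.1 hcI.2 hdI.1 hdI.2 x xs]
    have hF1 : ∀ x : X, F [x] = f (vpCl a b x) := fun x => hKform x []
    have hfm : MonotoneOn f (Set.Icc a b) := vpMonoOn hf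
    have hKapp : ∀ (x : X) (xs q : List X),
        vpK a b c d x (xs ++ q) = q.foldl (vpSF a b c d) (vpK a b c d x xs) := by
      intro x xs q
      simp [vpK, List.foldl_append]
    have hPre : VPreassoc F := by
      intro p u v q huv
      by_cases hu : u = []
      · subst hu
        have hv : v = [] := hSt v huv.symm
        subst hv
        rfl
      · by_cases hv : v = []
        · subst hv
          exact absurd (hSt u huv) hu
        · obtain ⟨x, xs, rfl⟩ := List.exists_cons_of_ne_nil hu
          obtain ⟨x', xs', rfl⟩ := List.exists_cons_of_ne_nil hv
          have hK : vpK a b c d x xs = vpK a b c d x' xs' :=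
            hf.injOn (vpK_mem a b c d hab x xs) (vpK_mem a b c d hab x' xs')
              (by rw [← hKform, ← hKform]; exact huv)
          cases p with
          | nil =>
            simp only [List.nil_append]
            rw [show (x :: xs) ++ q = x :: (xs ++ q) from rfl,
              show (x' :: xs') ++ q = x' :: (xs' ++ q) from rfl,
              hKform, hKform, hKapp, hKapp, hK]
          | cons z zs =>
            have e : ∀ (w : X) (ws : List X),
                (z :: zs) ++ (w :: ws) ++ q = z :: (zs ++ ((w :: ws) ++ q)) := by
              intro w ws
              simp
            rw [e x xs, e x' xs', hKform, hKform, hKapp z zs ((x :: xs) ++ q),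
              hKapp z zs ((x' :: xs') ++ q), List.foldl_append, List.foldl_append,
              vpBlock a b c d x xs, vpBlock a b c d x' xs', hK]
    have hU : VUnQRI F := by
      unfold VUnQRI VRanUnary VRanFlat
      ext w
      simp only [Set.mem_range, Set.mem_setOf_eq]
      constructor
      · rintro ⟨t, rfl⟩
        exact ⟨[t], by simp, rfl⟩
      · rintro ⟨l, hl, rfl⟩
        obtain ⟨x, xs, rfl⟩ := List.exists_cons_of_ne_nil hl
        refine ⟨vpK a b c d x xs, ?_⟩
        rw [hF1, vpCl_of_mem (vpK_mem a b c d hab x xs), ← hKform]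
    refine ⟨hPre, hU, ⟨f, hf, hcv, fun x => by rw [vpMed3 a x b hab]; exact hF1 x⟩, ?_, ?_⟩
    · intro n hn x
      obtain ⟨k, rfl⟩ : ∃ k, n = k + 1 := ⟨n - 1, by omega⟩
      rw [List.replicate_succ, hKform, vpK_replicate a b c d x k, ← hF1]
    · intro ys zs hlen
      rcases ys with _ | ⟨w, ws⟩
      · have hfun : (fun t : X => F ([] ++ t :: zs)) =
            fun t : X => f (zs.foldl (vpSF a b c d) (vpCl a b t)) := by
          funext t
          simp only [List.nil_append]
          exact hKform t zs
        constructor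
        · rw [hfun]
          exact fun t t' htt' => hfm (vpFoldl_mem a b c d hab zs _ (vpCl_mem a b t hab))
            (vpFoldl_mem a b c d hab zs _ (vpCl_mem a b t' hab))
            (vpFoldl_mono a b c d zs (vpCl_mono a b htt'))
        · rw [hfun, vpRangeFold a b c d (vpCl_range a b hab) zs f,
            vpFoldl_img a b c d zs a b hab]
          exact vpImgConv hf hcv (vpFoldl_mem a b c d hab zs a ⟨le_rfl, hab⟩)
            (vpFoldl_mem a b c d hab zs b ⟨hab, le_rfl⟩)
      · have hs0mem : vpK a b c d w ws ∈ Set.Icc a b := vpK_mem a b c d hab w ws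
        have hfun : (fun t : X => F ((w :: ws) ++ t :: zs)) =
            fun t : X => f (zs.foldl (vpSF a b c d)
              (vpPhi c d (vpK a b c d w ws) (vpCl a b t))) := by
          funext t
          have e : (w :: ws) ++ t :: zs = w :: (ws ++ t :: zs) := by simp
          rw [e, hKform w (ws ++ t :: zs), hKapp w ws (t :: zs)]
          rfl
        constructor
        · rw [hfun]
          exact fun t t' htt' =>
            hfm (vpFoldl_mem a b c d hab zs _ (vpPhi_mem hs0mem (vpCl_mem a b t hab)))
              (vpFoldl_mem a b c d hab zs _ (vpPhi_mem hs0mem (vpCl_mem a b t' hab)))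
              (vpFoldl_mono a b c d zs (vpPhi_mono c d le_rfl (vpCl_mono a b htt')))
        · rw [hfun, vpRangeFold a b c d (vpRange2 a b c d (vpK a b c d w ws) hab) zs f,
            vpFoldl_img a b c d zs _ _ (vpPhi_mono c d le_rfl hab)]
          exact vpImgConv hf hcv
            (vpFoldl_mem a b c d hab zs _ (vpPhi_mem hs0mem ⟨le_rfl, hab⟩))
            (vpFoldl_mem a b c d hab zs _ (vpPhi_mem hs0mem ⟨hab, le_rfl⟩))
  · -- part 3
    intro c hc d hd f hf hcv hform t ht
    have h1 : max (max (min c t) (med3 t (min c d) t)) (min d t) = t := by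
      unfold med3
      refine le_antisymm ?_ ?_ <;>
      · simp only [min_max_distrib_left, min_max_distrib_right, max_le_iff]
        simp [min_le_iff, le_max_iff, le_min_iff, max_le_iff]
    have h2 : F [t] = f (med3 a (max (max (min c t) (med3 t (min c d) t)) (min d t)) b) := by
      simpa using hform t []
    rw [h2, h1, vpMed3 a t b hab, vpCl_of_mem ht]
end

section
/- Let I be a real closed interval and [a,b] a closed subinterval of I. A standard function F : I* → ℝ is preassociative and unarily quasi-range-idempotent, there exists a continuous strictly increasing function f : [a,b] → ℝ such that F₁(x) = f(med(a, x, b)) for all x ∈ I, and F₂ is continuous, symmetric, nondecreasing in each argument, and satisfies F₂(x, x) = F₁(x) for every x ∈ I, if and only if there exist c ∈ [a,b] and a continuous strictly increasing function f : [a,b] → ℝ such that Fₙ(x₁, …, xₙ) = f(med(a, med(⋀ᵢ xᵢ, c, ⋁ᵢ xᵢ), b)) for every n ≥ 1. In this case f equals F₁ restricted to [a,b]. -/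
/-! Variadic functions on tuples (modeled as lists). -/

variable {X Y Y' : Type*}

lemma med3_nf (x y z : ℝ) : med3 x y z = max (min x z) (min y (max x z)) := by
  simp only [med3, min_def, max_def]; split_ifs <;> linarith

lemma med3_self (x c : ℝ) : med3 x c x = x := by
  rw [med3_nf]; rcases le_total c x with h | h <;> simp [min_def, max_def, h]

lemma med3_of_le {x z : ℝ} (y : ℝ) (h : x ≤ z) : med3 x y z = max x (min y z) := by
  rw [med3_nf, min_eq_left h, max_eq_right h]

lemma med3_comm (x c y : ℝ) : med3 x c y = med3 y c x := by
  rw [med3_nf, med3_nf, min_comm x y, max_comm x y]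

set_option maxHeartbeats 1000000 in
lemma key' (c m M p q : ℝ) (h : m ≤ M) :
    max (min p m) (min c (max q M))
      = max (min p (max m (min c M))) (min c (max q (max m (min c M)))) := by
  rcases le_total c m with h1 | h1
  · rw [min_eq_left (h1.trans h), max_eq_left h1]
    have e1 : min c (max q M) = c := min_eq_left (le_max_of_le_right (h1.trans h))
    have e2 : min c (max q m) = c := min_eq_left (le_max_of_le_right h1)
    rw [e1, e2]
  · rcases le_total M c with h2 | h2
    · rw [min_eq_right h2, max_eq_right h]
      simp only [min_def, max_def]; split_ifs <;> linarith
    · rw [min_eq_left h2, max_eq_right h1]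
      have e1 : min c (max q M) = c := min_eq_left (le_max_of_le_right h2)
      have e2 : min c (max q c) = c := min_eq_left (le_max_right _ _)
      rw [e1, e2, max_eq_right ((min_le_right p m).trans h1), max_eq_right (min_le_right p c)]

lemma med3_mono {m M m' M' : ℝ} (c : ℝ) (h1 : m ≤ m') (h2 : M ≤ M') :
    med3 m c M ≤ med3 m' c M' := by
  rw [med3_nf, med3_nf]
  exact max_le_max (min_le_min h1 h2) (min_le_min le_rfl (max_le_max h1 h2))

section CL
variable {a b c : ℝ} (hab : a ≤ b) (hac : a ≤ c) (hcb : c ≤ b)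

/-- clamp -/
noncomputable def cl (a b t : ℝ) : ℝ := max a (min t b)

lemma cl_min (s t : ℝ) : cl a b (min s t) = min (cl a b s) (cl a b t) := by
  simp only [cl, min_def, max_def]; split_ifs <;> linarith

lemma cl_max (s t : ℝ) : cl a b (max s t) = max (cl a b s) (cl a b t) := by
  simp only [cl, min_def, max_def]; split_ifs <;> linarith

include hab in
lemma cl_mem (t : ℝ) : cl a b t ∈ Set.Icc a b :=
  ⟨le_max_left _ _, max_le hab (min_le_right _ _)⟩

lemma cl_of_mem {t : ℝ} (ht : t ∈ Set.Icc a b) : cl a b t = t := by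
  rw [cl, min_eq_left ht.2, max_eq_right ht.1]

include hab in
lemma med3_a_b (t : ℝ) : med3 a t b = cl a b t := by rw [med3_of_le t hab]; rfl

lemma cl_mono {s t : ℝ} (h : s ≤ t) : cl a b s ≤ cl a b t :=
  max_le_max le_rfl (min_le_min h le_rfl)

include hac hcb in
lemma cl_med3 {m M : ℝ} (h : m ≤ M) :
    cl a b (med3 m c M) = max (cl a b m) (min c (cl a b M)) := by
  rw [med3_of_le c h, cl_max, cl_min, cl_of_mem ⟨hac, hcb⟩]

include hac hcb in
lemma key2 {m M : ℝ} (h : m ≤ M) (t : ℝ) :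
    med3 (cl a b (med3 m c M)) c (cl a b t)
      = cl a b (med3 (min t m) c (max t M)) := by
  have hab : a ≤ b := hac.trans hcb
  have h2 : min t m ≤ max t M :=
    (min_le_right _ _).trans (h.trans (le_max_right _ _))
  have hV := cl_med3 hac hcb (c := c) h
  rw [med3_nf, hV, min_comm _ (cl a b t), max_comm _ (cl a b t),
    ← key' c _ _ _ _ (cl_mono h), cl_med3 hac hcb h2, cl_min, cl_max]

include hac hcb in
lemma key3 {m M m' M' : ℝ} (h : m ≤ M) (h' : m' ≤ M')
    (heq : cl a b (med3 m c M) = cl a b (med3 m' c M')) (p q : ℝ) :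
    cl a b (med3 (min p m) c (max q M)) = cl a b (med3 (min p m') c (max q M')) := by
  have h2 : min p m ≤ max q M :=
    (min_le_right _ _).trans (h.trans (le_max_right _ _))
  have h2' : min p m' ≤ max q M' :=
    (min_le_right _ _).trans (h'.trans (le_max_right _ _))
  rw [cl_med3 hac hcb h2, cl_med3 hac hcb h2', cl_min, cl_max, cl_min, cl_max,
    key' c (cl a b m) (cl a b M) (cl a b p) (cl a b q) (cl_mono h),
    key' c (cl a b m') (cl a b M') (cl a b p) (cl a b q) (cl_mono h'),
    ← cl_med3 hac hcb h, ← cl_med3 hac hcb h', heq]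
end CL

lemma foldr_min_init (L : List ℝ) (u v : ℝ) :
    L.foldr min (min u v) = min u (L.foldr min v) := by
  induction L with
  | nil => rfl
  | cons h t ih => simp only [List.foldr_cons, ih, min_left_comm]

lemma foldr_max_init (L : List ℝ) (u v : ℝ) :
    L.foldr max (max u v) = max u (L.foldr max v) := by
  induction L with
  | nil => rfl
  | cons h t ih => simp only [List.foldr_cons, ih, max_left_comm]

lemma foldr_min_le (L : List ℝ) (r : ℝ) : L.foldr min r ≤ r := by
  induction L with
  | nil => exact le_rfl
  | cons h t ih => exact (min_le_right _ _).trans ih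

lemma le_foldr_max (L : List ℝ) (r : ℝ) : r ≤ L.foldr max r := by
  induction L with
  | nil => exact le_rfl
  | cons h t ih => exact ih.trans (le_max_right _ _)

/-- pull out the init when it's dominated by `B` -/
lemma foldr_min_comb (L : List ℝ) {r B : ℝ} (h : r ≤ B) :
    L.foldr min r = min (L.foldr min B) r := by
  induction L with
  | nil => simp [min_eq_right h]
  | cons x t ih => simp only [List.foldr_cons, ih, min_left_comm, min_assoc]

lemma foldr_max_comb (L : List ℝ) {r A : ℝ} (h : A ≤ r) :
    L.foldr max r = max (L.foldr max A) r := by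
  induction L with
  | nil => simp [max_eq_right h]
  | cons x t ih => simp only [List.foldr_cons, ih, max_left_comm, max_assoc]

/-- the main fold identity -/
lemma fold_med (a b c : ℝ) (hac : a ≤ c) (hcb : c ≤ b) :
    ∀ (L : List ℝ) (m M : ℝ), m ≤ M →
    List.foldl (fun u t => med3 u c (cl a b t)) (cl a b (med3 m c M)) L
      = cl a b (med3 (L.foldr min m) c (L.foldr max M)) := by
  intro L
  induction L with
  | nil => intro m M h; rfl
  | cons t L ih =>
    intro m M h
    have h' : min t m ≤ max t M :=
      (min_le_right _ _).trans (h.trans (le_max_right _ _))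
    simp only [List.foldl_cons, List.foldr_cons]
    rw [key2 hac hcb h t, ih _ _ h']
    congr 1
    rw [med3_nf, med3_nf, foldr_min_init, foldr_max_init]

theorem stmt19 (A B : ℝ) (hAB : A ≤ B) (a b : ℝ)
    (hAa : A ≤ a) (hab : a ≤ b) (hbB : b ≤ B)
    (F : List ↥(Set.Icc A B) → ℝ) (hSt : VStandard F) :
    ((VPreassoc F ∧ VUnQRI F ∧
        (∃ f : ℝ → ℝ, ContinuousOn f (Set.Icc a b) ∧ StrictMonoOn f (Set.Icc a b) ∧
          ∀ x : ↥(Set.Icc A B), F [x] = f (med3 a (x : ℝ) b)) ∧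
        Continuous (fun p : ↥(Set.Icc A B) × ↥(Set.Icc A B) => F [p.1, p.2]) ∧
        (∀ x y : ↥(Set.Icc A B), F [x, y] = F [y, x]) ∧
        (∀ x : ↥(Set.Icc A B), Monotone fun y : ↥(Set.Icc A B) => F [x, y]) ∧
        (∀ y : ↥(Set.Icc A B), Monotone fun x : ↥(Set.Icc A B) => F [x, y]) ∧
        (∀ x : ↥(Set.Icc A B), F [x, x] = F [x]))
      ↔
      (∃ c ∈ Set.Icc a b, ∃ f : ℝ → ℝ,
        ContinuousOn f (Set.Icc a b) ∧ StrictMonoOn f (Set.Icc a b) ∧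
        ∀ (x : ↥(Set.Icc A B)) (xs : List ↥(Set.Icc A B)),
          F (x :: xs) = f (med3 a
            (med3 ((xs.map Subtype.val).foldr min (x : ℝ)) c
              ((xs.map Subtype.val).foldr max (x : ℝ))) b)))
    ∧
    -- in this case f equals F₁ restricted to [a,b]
    (∀ c ∈ Set.Icc a b, ∀ f : ℝ → ℝ,
      ContinuousOn f (Set.Icc a b) → StrictMonoOn f (Set.Icc a b) →
      (∀ (x : ↥(Set.Icc A B)) (xs : List ↥(Set.Icc A B)),
        F (x :: xs) = f (med3 a
          (med3 ((xs.map Subtype.val).foldr min (x : ℝ)) c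
            ((xs.map Subtype.val).foldr max (x : ℝ))) b)) →
      ∀ t : ℝ, ∀ ht : t ∈ Set.Icc a b,
        f t = F [⟨t, Set.mem_Icc.mpr
          ⟨hAa.trans (Set.mem_Icc.mp ht).1, (Set.mem_Icc.mp ht).2.trans hbB⟩⟩]) := by
  constructor
  · constructor
    · rintro ⟨hPre, hQRI, ⟨f, hfc, hfm, hf1⟩, hcont, hsym, hm1, hm2, hid⟩
      have hmemAB : ∀ t : ℝ, t ∈ Set.Icc a b → t ∈ Set.Icc A B :=
        fun t ht => ⟨hAa.trans ht.1, ht.2.trans hbB⟩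
      set E : ℝ → ↥(Set.Icc A B) := fun t => ⟨cl a b t, hmemAB _ (cl_mem hab t)⟩ with hEdef
      have hEvl : ∀ t : ℝ, (E t : ℝ) = cl a b t := fun t => rfl
      have hf1' : ∀ x : ↥(Set.Icc A B), F [x] = f (cl a b (x : ℝ)) := by
        intro x; rw [hf1, med3_a_b hab]
      have hFE : ∀ t ∈ Set.Icc a b, F [E t] = f t := by
        intro t ht
        rw [hf1' (E t), hEvl, cl_of_mem (cl_mem hab t), cl_of_mem ht]
      have hclU : ∀ x : ↥(Set.Icc A B), F [x] = F [E (cl a b (x : ℝ))] := by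
        intro x; rw [hf1' x, hFE _ (cl_mem hab _)]
      have hflat : ∀ l : List ↥(Set.Icc A B), l ≠ [] → ∃ u, u ∈ Set.Icc a b ∧ F l = f u := by
        intro l hl
        have h1 : F l ∈ VRanFlat F := ⟨l, hl, rfl⟩
        rw [← hQRI] at h1
        obtain ⟨x, hx⟩ := h1
        exact ⟨cl a b (x : ℝ), cl_mem hab _, by rw [← hx]; exact hf1' x⟩
      set Hr : ℝ → ℝ → ℝ := fun s t => (hflat [E s, E t] (by simp)).choose with hHrdef
      have hHmem : ∀ s t, Hr s t ∈ Set.Icc a b :=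
        fun s t => (hflat [E s, E t] (by simp)).choose_spec.1
      have hHf : ∀ s t, F [E s, E t] = f (Hr s t) :=
        fun s t => (hflat [E s, E t] (by simp)).choose_spec.2
      have hpairF : ∀ s t : ℝ, F [E s, E t] = F [E (Hr s t)] := by
        intro s t; rw [hHf, hFE _ (hHmem s t)]
      have hpair : ∀ (s t : ℝ) (l : List ↥(Set.Icc A B)),
          F (E s :: E t :: l) = F (E (Hr s t) :: l) := by
        intro s t l
        have := hPre [] [E s, E t] [E (Hr s t)] l (hpairF s t)
        simpa using this
      have finj : Set.InjOn f (Set.Icc a b) := hfm.injOn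
      have hHcomm : ∀ s t, Hr s t = Hr t s := by
        intro s t
        apply finj (hHmem s t) (hHmem t s)
        rw [← hHf, ← hHf, hsym]
      have hHidem : ∀ s ∈ Set.Icc a b, Hr s s = s := by
        intro s hs
        apply finj (hHmem s s) hs
        rw [← hHf, hid, hFE s hs]
      have hEmono : Monotone E := fun s t h => Subtype.mk_le_mk.mpr (cl_mono h)
      have hHmono : ∀ s t t', t ≤ t' → Hr s t ≤ Hr s t' := by
        intro s t t' h
        have h2 : F [E s, E t] ≤ F [E s, E t'] := hm1 (E s) (hEmono h)
        rw [hHf, hHf] at h2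
        exact (hfm.le_iff_le (hHmem s t) (hHmem s t')).mp h2
      have hHassoc : ∀ s t u, Hr (Hr s t) u = Hr s (Hr t u) := by
        intro s t u
        apply finj (hHmem _ _) (hHmem _ _)
        rw [← hHf, ← hHf]
        have e1 : F [E (Hr s t), E u] = F [E s, E t, E u] := (hpair s t [E u]).symm
        have e2 : F [E s, E (Hr t u)] = F [E s, E t, E u] := by
          have := hPre [E s] [E t, E u] [E (Hr t u)] [] (hpairF t u)
          simpa using this.symm
        rw [e1, e2]
      have hEcont : Continuous E := Continuous.subtype_mk (by unfold cl; fun_prop) _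
      have hIVT : ∀ s u v y, u ≤ v → Hr s u ≤ y → y ≤ Hr s v →
          ∃ t ∈ Set.Icc u v, Hr s t = y := by
        intro s u v y huv h1 h2
        have hy : y ∈ Set.Icc a b := ⟨(hHmem s u).1.trans h1, h2.trans (hHmem s v).2⟩
        have hg : Continuous fun t => F [E s, E t] := by
          have hh : (fun t => F [E s, E t])
              = (fun p : ↥(Set.Icc A B) × ↥(Set.Icc A B) => F [p.1, p.2])
                ∘ (fun t => (E s, E t)) := rfl
          rw [hh]
          exact hcont.comp (continuous_const.prodMk hEcont)
        have hfmem : f y ∈ Set.Icc ((fun t => F [E s, E t]) u) ((fun t => F [E s, E t]) v) := by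
          simp only
          rw [hHf, hHf]
          exact ⟨hfm.monotoneOn (hHmem s u) hy h1, hfm.monotoneOn hy (hHmem s v) h2⟩
        obtain ⟨t, ht, hgt⟩ := intermediate_value_Icc huv hg.continuousOn hfmem
        refine ⟨t, ht, finj (hHmem s t) hy ?_⟩
        rw [← hHf]
        exact hgt
      set c := Hr a b with hcdef
      have hcmem : c ∈ Set.Icc a b := hHmem a b
      have habm : a ∈ Set.Icc a b := ⟨le_rfl, hab⟩
      have hbbm : b ∈ Set.Icc a b := ⟨hab, le_rfl⟩
      have hca : Hr c a = c := by
        calc Hr (Hr a b) a = Hr a (Hr b a) := hHassoc a b a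
        _ = Hr a (Hr a b) := by rw [hHcomm b a]
        _ = Hr (Hr a a) b := (hHassoc a a b).symm
        _ = Hr a b := by rw [hHidem a habm]
      have hcbb : Hr c b = c := by
        calc Hr (Hr a b) b = Hr a (Hr b b) := hHassoc a b b
        _ = Hr a b := by rw [hHidem b hbbm]
      have habsorb : ∀ t ∈ Set.Icc a b, Hr c t = c := by
        intro t ht
        refine le_antisymm ?_ ?_
        · conv_rhs => rw [← hcbb]
          exact hHmono c t b ht.2
        · conv_lhs => rw [← hca]
          exact hHmono c a t ht.1
      have hres1 : ∀ s ∈ Set.Icc a b, ∀ t, Hr s (Hr s t) = Hr s t := by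
        intro s hs t; rw [← hHassoc, hHidem s hs]
      have hres2 : ∀ s t, t ∈ Set.Icc a b → Hr (Hr s t) t = Hr s t := by
        intro s t ht; rw [hHassoc, hHidem t ht]
      have hlow : ∀ s t, s ∈ Set.Icc a b → t ∈ Set.Icc a b → s ≤ t → t ≤ c →
          Hr s t = t := by
        intro s t hs ht hst htc
        set u := Hr s t with hudef
        have hu := hHmem s t
        have hut : u ≤ t := by
          rw [hudef, hHcomm]
          calc Hr t s ≤ Hr t t := hHmono t s t hst
          _ = t := hHidem t ht
        obtain ⟨r, hr, hrr⟩ := hIVT u u c t (hut.trans htc)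
          (by rw [hHidem _ hu]; exact hut)
          (by rw [hHcomm _ c, habsorb _ hu]; exact htc)
        have e2 : Hr u t = t := by rw [← hrr]; exact hres1 u hu r
        have e3 : Hr u t = u := hres2 s t ht
        exact e3.symm.trans e2
      have hhigh : ∀ s t, s ∈ Set.Icc a b → t ∈ Set.Icc a b → s ≤ t → c ≤ s →
          Hr s t = s := by
        intro s t hs ht hst hcs
        set u := Hr s t with hudef
        have hu := hHmem s t
        have hsu : s ≤ u := by
          conv_lhs => rw [← hHidem s hs]
          exact hHmono s s t hst
        obtain ⟨r, hr, hrr⟩ := hIVT u c u s (hcs.trans hsu)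
          (by rw [hHcomm _ c, habsorb _ hu]; exact hcs)
          (by rw [hHidem _ hu]; exact hsu)
        have e2 : Hr u s = s := by rw [← hrr]; exact hres1 u hu r
        have e3 : Hr u s = u := by
          rw [hHcomm u s]
          exact hres1 s hs t
        exact e3.symm.trans e2
      have hmid : ∀ s t, s ∈ Set.Icc a b → t ∈ Set.Icc a b → s ≤ c → c ≤ t →
          Hr s t = c := by
        intro s t hs ht hsc hct
        refine le_antisymm ?_ ?_
        · calc Hr s t = Hr t s := hHcomm s t
          _ ≤ Hr t c := hHmono t s c hsc
          _ = Hr c t := hHcomm t c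
          _ = c := habsorb t ht
        · have h1 : Hr s c = c := hlow s c hs hcmem hsc le_rfl
          calc c = Hr s c := h1.symm
          _ ≤ Hr s t := hHmono s c t hct
      have hclass' : ∀ s t, s ∈ Set.Icc a b → t ∈ Set.Icc a b → s ≤ t →
          Hr s t = med3 s c t := by
        intro s t hs ht hst
        rw [med3_of_le c hst]
        rcases le_total t c with h1 | h1
        · rw [min_eq_right h1, max_eq_right hst]
          exact hlow s t hs ht hst h1
        · rcases le_total c s with h2 | h2
          · rw [min_eq_left (h2.trans hst), max_eq_left h2]
            exact hhigh s t hs ht hst h2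
          · rw [min_eq_left h1, max_eq_right h2]
            exact hmid s t hs ht h2 h1
      have hclass : ∀ s t, s ∈ Set.Icc a b → t ∈ Set.Icc a b → Hr s t = med3 s c t := by
        intro s t hs ht
        rcases le_total s t with h | h
        · exact hclass' s t hs ht h
        · rw [hHcomm, med3_comm]
          exact hclass' t s ht hs h
      have claimW : ∀ (xs : List ↥(Set.Icc A B)) (s : ℝ), s ∈ Set.Icc a b →
          F (E s :: xs) = f (xs.foldl (fun (u : ℝ) (y : ↥(Set.Icc A B)) => Hr u (cl a b (y : ℝ))) s) := by
        intro xs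
        induction xs with
        | nil => intro s hs; simpa using hFE s hs
        | cons y t ih =>
          intro s hs
          have e1 : F (E s :: y :: t) = F (E s :: E (cl a b (y : ℝ)) :: t) := by
            have := hPre [E s] [y] [E (cl a b (y : ℝ))] t (hclU y)
            simpa using this
          rw [e1, hpair s (cl a b (y : ℝ)) t, ih _ (hHmem _ _)]
          rfl
      have claimMF : ∀ (xs : List ↥(Set.Icc A B)) (s : ℝ), s ∈ Set.Icc a b →
          xs.foldl (fun (u : ℝ) (y : ↥(Set.Icc A B)) => Hr u (cl a b (y : ℝ))) s
            = xs.foldl (fun (u : ℝ) (y : ↥(Set.Icc A B)) => med3 u c (cl a b (y : ℝ))) s := by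
        intro xs
        induction xs with
        | nil => intro s _; rfl
        | cons y t ih =>
          intro s hs
          rw [List.foldl_cons, List.foldl_cons, ih _ (hHmem _ _),
            hclass s (cl a b (y : ℝ)) hs (cl_mem hab _)]
      refine ⟨c, hcmem, f, hfc, hfm, ?_⟩
      intro x xs
      have e0 : F (x :: xs) = F (E (cl a b (x : ℝ)) :: xs) := by
        have := hPre [] [x] [E (cl a b (x : ℝ))] xs (hclU x)
        simpa using this
      have hswap : ∀ (ys : List ↥(Set.Icc A B)) (s : ℝ),
          ys.foldl (fun (u : ℝ) (y : ↥(Set.Icc A B)) => med3 u c (cl a b (y : ℝ))) s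
            = (ys.map Subtype.val).foldl (fun u t => med3 u c (cl a b t)) s := by
        intro ys
        induction ys with
        | nil => intro s; rfl
        | cons y t ih => intro s; simp only [List.map_cons, List.foldl_cons, ih]
      rw [e0, claimW xs _ (cl_mem hab _), claimMF xs _ (cl_mem hab _), hswap]
      have hfold := fold_med a b c hcmem.1 hcmem.2 (xs.map Subtype.val) (x : ℝ) (x : ℝ) le_rfl
      rw [med3_self] at hfold
      rw [hfold, med3_a_b hab]
    · rintro ⟨c, hc, f, hfc, hfm, hrep⟩
      have hac : a ≤ c := hc.1
      have hcb : c ≤ b := hc.2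
      have finj : Set.InjOn f (Set.Icc a b) := hfm.injOn
      -- representation in clamp form
      have hrep' : ∀ (x : ↥(Set.Icc A B)) (xs : List ↥(Set.Icc A B)),
          F (x :: xs) = f (cl a b (med3 ((xs.map Subtype.val).foldr min (x : ℝ)) c
            ((xs.map Subtype.val).foldr max (x : ℝ)))) := by
        intro x xs; rw [hrep, med3_a_b hab]
      -- representation with init B / A
      have hreprB : ∀ l : List ↥(Set.Icc A B), l ≠ [] →
          F l = f (cl a b (med3 ((l.map Subtype.val).foldr min B) c
            ((l.map Subtype.val).foldr max A))) := by
        intro l hl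
        match l with
        | x :: xs =>
          rw [hrep' x xs, foldr_min_comb (xs.map Subtype.val) x.2.2,
            foldr_max_comb (xs.map Subtype.val) x.2.1]
          simp only [List.map_cons, List.foldr_cons]
          rw [min_comm (List.foldr min B (xs.map Subtype.val)) (x : ℝ),
            max_comm (List.foldr max A (xs.map Subtype.val)) (x : ℝ)]
      have hmM : ∀ l : List ↥(Set.Icc A B), l ≠ [] →
          (l.map Subtype.val).foldr min B ≤ (l.map Subtype.val).foldr max A := by
        intro l hl
        match l with
        | x :: xs =>
          rw [List.map_cons, List.foldr_cons, List.foldr_cons]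
          exact (min_le_left _ _).trans (le_max_left _ _)
      have hminapp : ∀ L1 L2 : List ℝ, (L1 ++ L2).foldr min B
          = min (L1.foldr min B) (L2.foldr min B) := by
        intro L1 L2
        rw [List.foldr_append, foldr_min_comb _ (foldr_min_le _ _), min_comm]
      have hmaxapp : ∀ L1 L2 : List ℝ, (L1 ++ L2).foldr max A
          = max (L1.foldr max A) (L2.foldr max A) := by
        intro L1 L2
        rw [List.foldr_append, foldr_max_comb _ (le_foldr_max _ _), max_comm]
      refine ⟨?_, ?_, ⟨f, hfc, hfm, ?_⟩, ?_, ?_, ?_, ?_, ?_⟩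
      · -- preassociativity
        intro x y y' z hyy'
        by_cases hy : y = []
        · subst hy
          have : y' = [] := hSt y' hyy'.symm
          subst this; rfl
        · have hy' : y' ≠ [] := by
            intro h; subst h; exact hy (hSt y hyy')
          have e1 : cl a b (med3 ((y.map Subtype.val).foldr min B) c
                ((y.map Subtype.val).foldr max A))
              = cl a b (med3 ((y'.map Subtype.val).foldr min B) c
                ((y'.map Subtype.val).foldr max A)) := by
            apply finj (cl_mem hab _) (cl_mem hab _)
            rw [← hreprB y hy, ← hreprB y' hy', hyy']
          have hne : x ++ y ++ z ≠ [] := by simp [hy]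
          have hne' : x ++ y' ++ z ≠ [] := by simp [hy']
          rw [hreprB _ hne, hreprB _ hne']
          congr 1
          have hmin : ∀ u : List ↥(Set.Icc A B),
              (((x ++ u ++ z)).map Subtype.val).foldr min B
              = min (min ((x.map Subtype.val).foldr min B)
                  ((z.map Subtype.val).foldr min B)) ((u.map Subtype.val).foldr min B) := by
            intro u
            rw [List.map_append, List.map_append, hminapp, hminapp]
            rw [min_assoc, min_comm ((u.map Subtype.val).foldr min B), ← min_assoc]
          have hmax : ∀ u : List ↥(Set.Icc A B),
              (((x ++ u ++ z)).map Subtype.val).foldr max A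
              = max (max ((x.map Subtype.val).foldr max A)
                  ((z.map Subtype.val).foldr max A)) ((u.map Subtype.val).foldr max A) := by
            intro u
            rw [List.map_append, List.map_append, hmaxapp, hmaxapp]
            rw [max_assoc, max_comm ((u.map Subtype.val).foldr max A), ← max_assoc]
          rw [hmin y, hmax y, hmin y', hmax y']
          exact key3 hac hcb (hmM y hy) (hmM y' hy') e1 _ _
      · -- VUnQRI
        apply Set.eq_of_subset_of_subset
        · rintro r ⟨x, rfl⟩
          exact ⟨[x], by simp, rfl⟩
        · rintro r ⟨l, hl, rfl⟩
          have hw : cl a b (med3 ((l.map Subtype.val).foldr min B) c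
              ((l.map Subtype.val).foldr max A)) ∈ Set.Icc a b := cl_mem hab _
          refine ⟨⟨_, ⟨hAa.trans hw.1, hw.2.trans hbB⟩⟩, ?_⟩
          beta_reduce
          rw [hreprB l hl, hrep']
          simp only [List.map_nil, List.foldr_nil]
          rw [med3_self, cl_of_mem hw]
      · -- unary formula
        intro x
        rw [hrep' x [], med3_a_b hab]
        simp only [List.map_nil, List.foldr_nil]
        rw [med3_self]
      · -- continuity
        have hform : (fun p : ↥(Set.Icc A B) × ↥(Set.Icc A B) => F [p.1, p.2])
            = fun p => f (cl a b (med3 (min (p.2 : ℝ) (p.1 : ℝ)) c (max (p.2 : ℝ) (p.1 : ℝ)))) := by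
          funext p
          rw [hrep' p.1 [p.2]]
          simp only [List.map_cons, List.map_nil, List.foldr_cons, List.foldr_nil]
        rw [hform]
        apply hfc.comp_continuous
        · unfold cl med3
          fun_prop
        · intro p; exact cl_mem hab _
      · -- symmetry
        intro x y
        rw [hrep' x [y], hrep' y [x]]
        simp only [List.map_cons, List.map_nil, List.foldr_cons, List.foldr_nil]
        rw [min_comm, max_comm]
      · -- monotone in 2nd arg
        intro x y₁ y₂ h
        simp only
        rw [hrep' x [y₁], hrep' x [y₂]]
        simp only [List.map_cons, List.map_nil, List.foldr_cons, List.foldr_nil]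
        apply hfm.monotoneOn (cl_mem hab _) (cl_mem hab _)
        exact cl_mono (med3_mono c (min_le_min h le_rfl) (max_le_max h le_rfl))
      · -- monotone in 1st arg
        intro y x₁ x₂ h
        simp only
        rw [hrep' x₁ [y], hrep' x₂ [y]]
        simp only [List.map_cons, List.map_nil, List.foldr_cons, List.foldr_nil]
        apply hfm.monotoneOn (cl_mem hab _) (cl_mem hab _)
        exact cl_mono (med3_mono c (min_le_min le_rfl h) (max_le_max le_rfl h))
      · -- F [x,x] = F [x]
        intro x
        rw [hrep' x [x], hrep' x []]
        simp only [List.map_cons, List.map_nil, List.foldr_cons, List.foldr_nil,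
          min_self, max_self]
  · -- part 2
    intro c hc f hfc hfm hrep t ht
    rw [hrep _ []]
    simp only [List.map_nil, List.foldr_nil]
    rw [med3_self, med3_a_b hab, cl_of_mem ht]
end
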